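/- If a sequent ⊢ Γ is provable in LK1, then there exists a sequent Γ' containing no occurrence of ⊥ such that ⊢ Γ' is provable in MLL1 and there is a derivation from ⋁Γ' to ⋁Γ using only the deep inference rules w↓, c↓, ≡. -/

import Mathlib

set_option linter.unusedVariables false

/-! ## First-order terms and formulas in negation normal form -/

/-- First-order terms: variables and function symbols are named by natural numbers.
(A function symbol together with the number of arguments it is applied to plays the
role of a symbol of fixed finite arity; there are countably many symbols of each arity.) -/
inductive Term : Type where
  | var : ℕ → Term
  | fn  : ℕ → List Term → Term

/-- The variable `x` occurs in the term. -/
inductive Term.HasVar : Term → ℕ → Prop where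
  | var (x : ℕ) : HasVar (.var x) x
  | fn {f : ℕ} {ts : List Term} {t : Term} {x : ℕ} :
      t ∈ ts → HasVar t x → HasVar (.fn f ts) x

/-- Simultaneous substitution on terms. -/
def Term.subst (σ : ℕ → Term) : Term → Term
  | .var x => σ x
  | .fn f ts => .fn f (ts.attach.map fun t => t.1.subst σ)
decreasing_by
  have := List.sizeOf_lt_of_mem t.2
  simp at *; omega

/-- Renaming of variables in a term. -/
def Term.rename (ρ : ℕ → ℕ) (t : Term) : Term := t.subst (fun x => .var (ρ x))

/-- Formulas in negation normal form: `pos p ts` is the atom `p(ts)` and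
`neg p ts` is the atom `p̄(ts)` built from the dual predicate symbol. -/
inductive Form : Type where
  | pos : ℕ → List Term → Form
  | neg : ℕ → List Term → Form
  | top : Form
  | bot : Form
  | and : Form → Form → Form
  | or  : Form → Form → Form
  | all : ℕ → Form → Form
  | ex  : ℕ → Form → Form

namespace Form

/-- Atoms: `⊤`, `⊥`, `p(ts)`, `p̄(ts)`. -/
def IsAtom : Form → Prop
  | pos _ _ => True
  | neg _ _ => True
  | top => True
  | bot => True
  | _ => False

/-- Negation, defined via De Morgan duality. -/
def negf : Form → Form
  | pos p ts => neg p ts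
  | neg p ts => pos p ts
  | top => bot
  | bot => top
  | and A B => or A.negf B.negf
  | or A B => and A.negf B.negf
  | all x A => ex x A.negf
  | ex x A => all x A.negf

/-- The variable `x` occurs free in the formula. -/
inductive FreeVar : Form → ℕ → Prop where
  | pos {p ts t x} : t ∈ ts → Term.HasVar t x → FreeVar (pos p ts) x
  | neg {p ts t x} : t ∈ ts → Term.HasVar t x → FreeVar (neg p ts) x
  | andl {A B x} : FreeVar A x → FreeVar (and A B) x
  | andr {A B x} : FreeVar B x → FreeVar (and A B) x
  | orl {A B x} : FreeVar A x → FreeVar (or A B) x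
  | orr {A B x} : FreeVar B x → FreeVar (or A B) x
  | all {A x y} : FreeVar A x → x ≠ y → FreeVar (all y A) x
  | ex {A x y} : FreeVar A x → x ≠ y → FreeVar (ex y A) x

/-- Substitution of the term `u` for all free occurrences of the variable `x`. -/
def subst1 (x : ℕ) (u : Term) : Form → Form
  | pos p ts => pos p (ts.map (Term.subst (fun y => if y = x then u else .var y)))
  | neg p ts => neg p (ts.map (Term.subst (fun y => if y = x then u else .var y)))
  | top => top
  | bot => bot
  | and A B => and (A.subst1 x u) (B.subst1 x u)
  | or A B => or (A.subst1 x u) (B.subst1 x u)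
  | all y A => if y = x then all y A else all y (A.subst1 x u)
  | ex y A => if y = x then ex y A else ex y (A.subst1 x u)

/-- Application of a variable renaming to a formula, renaming all occurrences
of variables (both free and bound). -/
def renameAll (ρ : ℕ → ℕ) : Form → Form
  | pos p ts => pos p (ts.map (Term.rename ρ))
  | neg p ts => neg p (ts.map (Term.rename ρ))
  | top => top
  | bot => bot
  | and A B => and (A.renameAll ρ) (B.renameAll ρ)
  | or A B => or (A.renameAll ρ) (B.renameAll ρ)
  | all y A => all (ρ y) (A.renameAll ρ)
  | ex y A => ex (ρ y) (A.renameAll ρ)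

/-- The formula contains no occurrence of `⊥`. -/
def BotFree : Form → Prop
  | bot => False
  | and A B => BotFree A ∧ BotFree B
  | or A B => BotFree A ∧ BotFree B
  | all _ A => BotFree A
  | ex _ A => BotFree A
  | _ => True

/-- Formula equivalence `≡`: the smallest congruence generated by commutativity and
associativity of `∧` and `∨`, commutation of like quantifiers, and the scope equations
`∀x.(A∨B) ≡ (∀x.A)∨B` and `∃x.(A∧B) ≡ (∃x.A)∧B` when `x` is not free in `B`. -/
inductive Equiv : Form → Form → Prop where
  | refl (A) : Equiv A A
  | symm {A B} : Equiv A B → Equiv B A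
  | trans {A B C} : Equiv A B → Equiv B C → Equiv A C
  | andCongr {A A' B B'} : Equiv A A' → Equiv B B' → Equiv (and A B) (and A' B')
  | orCongr {A A' B B'} : Equiv A A' → Equiv B B' → Equiv (or A B) (or A' B')
  | allCongr {A A'} (x) : Equiv A A' → Equiv (all x A) (all x A')
  | exCongr {A A'} (x) : Equiv A A' → Equiv (ex x A) (ex x A')
  | andComm (A B) : Equiv (and A B) (and B A)
  | orComm (A B) : Equiv (or A B) (or B A)
  | andAssoc (A B C) : Equiv (and (and A B) C) (and A (and B C))
  | orAssoc (A B C) : Equiv (or (or A B) C) (or A (or B C))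
  | allSwap (x y A) : Equiv (all x (all y A)) (all y (all x A))
  | exSwap (x y A) : Equiv (ex x (ex y A)) (ex y (ex x A))
  | allOr (x A B) (h : ¬ FreeVar B x) : Equiv (all x (or A B)) (or (all x A) B)
  | exAnd (x A B) (h : ¬ FreeVar B x) : Equiv (ex x (and A B)) (and (ex x A) B)

/-- The list of binding occurrences of variables in a formula. -/
def bvList : Form → List ℕ
  | and A B => A.bvList ++ B.bvList
  | or A B => A.bvList ++ B.bvList
  | all x A => x :: A.bvList
  | ex x A => x :: A.bvList
  | _ => []

/-- A formula is rectified if all bound variables are distinct from one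
another and from all free variables. -/
def Rectified (A : Form) : Prop :=
  A.bvList.Nodup ∧ ∀ x ∈ A.bvList, ¬ A.FreeVar x

/-- The variable `x` occurs (free or bound) in the formula. -/
def VarOccurs (A : Form) (x : ℕ) : Prop := A.FreeVar x ∨ x ∈ A.bvList

/-- The disjunction `⋁Γ` of the formulas of a sequent (written as a list);
by convention the empty disjunction is `⊥`. -/
def bigOr : List Form → Form
  | [] => bot
  | [A] => A
  | A :: B :: Γ => or A (bigOr (B :: Γ))

end Form

/-- α-conversion: renaming of bound variables. -/
inductive Alpha : Form → Form → Prop where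
  | refl (A) : Alpha A A
  | symm {A B} : Alpha A B → Alpha B A
  | trans {A B C} : Alpha A B → Alpha B C → Alpha A C
  | andCongr {A A' B B'} : Alpha A A' → Alpha B B' → Alpha (.and A B) (.and A' B')
  | orCongr {A A' B B'} : Alpha A A' → Alpha B B' → Alpha (.or A B) (.or A' B')
  | allCongr {A A'} (x) : Alpha A A' → Alpha (.all x A) (.all x A')
  | exCongr {A A'} (x) : Alpha A A' → Alpha (.ex x A) (.ex x A')
  | allRen (x y A) (h : ¬ A.VarOccurs y) :
      Alpha (.all x A) (.all y (A.subst1 x (.var y)))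
  | exRen (x y A) (h : ¬ A.VarOccurs y) :
      Alpha (.ex x A) (.ex y (A.subst1 x (.var y)))

/-- `B` is a rectification of `A`: a rectified form of `A` obtained by renaming
bound variables. -/
def IsRectification (B A : Form) : Prop := Alpha A B ∧ B.Rectified

/-! ## Deep inference -/

/-- A (positive) context: a formula with exactly one hole in atom position. -/
inductive Ctx : Type where
  | hole : Ctx
  | andL : Ctx → Form → Ctx
  | andR : Form → Ctx → Ctx
  | orL  : Ctx → Form → Ctx
  | orR  : Form → Ctx → Ctx
  | all  : ℕ → Ctx → Ctx
  | ex   : ℕ → Ctx → Ctx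

/-- `S.fill A` replaces the hole of `S` by `A`. -/
def Ctx.fill : Ctx → Form → Form
  | .hole, A => A
  | .andL S B, A => .and (S.fill A) B
  | .andR B S, A => .and B (S.fill A)
  | .orL S B, A => .or (S.fill A) B
  | .orR B S, A => .or B (S.fill A)
  | .all x S, A => .all x (S.fill A)
  | .ex x S, A => .ex x (S.fill A)

/-- The names of the deep inference rules. -/
inductive RuleName : Type where
  | allTop   -- ∀⊤
  | aiDown   -- ai↓
  | tDown    -- t↓
  | s        -- switch
  | mix      -- mix
  | exR      -- ∃
  | equivR   -- ≡
  | wDown    -- w↓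
  | m        -- medial
  | acDown   -- ac↓
  | mAll     -- m∀
  | mEx      -- m∃
  | wAll     -- w∀
  | cAll     -- c∀
  | cDown    -- general contraction c↓
  deriving DecidableEq

/-- Shallow instances of the deep inference rules: `Shallow r P Q` means that the
rule `r` rewrites the premise `P` into the conclusion `Q` (with the empty context). -/
inductive Shallow : RuleName → Form → Form → Prop where
  | allTop (x : ℕ) : Shallow .allTop .top (.all x .top)
  | aiDown (a : Form) (h : a.IsAtom) : Shallow .aiDown .top (.or a a.negf)
  | tDown (A : Form) : Shallow .tDown A (.and A .top)
  | s (A B C : Form) : Shallow .s (.and A (.or B C)) (.or (.and A B) C)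
  | mix (A B : Form) : Shallow .mix (.and A B) (.or A B)
  | exR (x : ℕ) (t : Term) (A : Form) : Shallow .exR (A.subst1 x t) (.ex x A)
  | equivR {A B : Form} (h : Form.Equiv A B) : Shallow .equivR B A
  | wDown (A B : Form) : Shallow .wDown A (.or A B)
  | m (A B C D : Form) :
      Shallow .m (.or (.and A C) (.and B D)) (.and (.or A B) (.or C D))
  | acDown (a : Form) (h : a.IsAtom) : Shallow .acDown (.or a a) a
  | mAll (x : ℕ) (A B : Form) :
      Shallow .mAll (.or (.all x A) (.all x B)) (.all x (.or A B))
  | mEx (x : ℕ) (A B : Form) :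
      Shallow .mEx (.or (.ex x A) (.ex x B)) (.ex x (.or A B))
  | wAll (x : ℕ) (A : Form) (h : ¬ A.FreeVar x) : Shallow .wAll A (.all x A)
  | cAll (x : ℕ) (A : Form) : Shallow .cAll (.all x (.all x A)) (.all x A)
  | cDown (A : Form) : Shallow .cDown (.or A A) A

/-- One deep inference step using a rule from `R`, applied inside a context. -/
def Step (R : Set RuleName) (A B : Form) : Prop :=
  ∃ r ∈ R, ∃ (S : Ctx) (P Q : Form), Shallow r P Q ∧ A = S.fill P ∧ B = S.fill Q

/-- `Deriv R A B`: there is a derivation from `A` to `B` using only rules from `R`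
(a finite sequence of deep inference steps rewriting `A` into `B`). -/
def Deriv (R : Set RuleName) : Form → Form → Prop :=
  Relation.ReflTransGen (Step R)

/-- A formula is provable in a system if there is a derivation from `⊤` to it. -/
def Provable (R : Set RuleName) (A : Form) : Prop := Deriv R .top A

/-- The linear system `MLS1X`. -/
def MLS1X : Set RuleName :=
  {RuleName.allTop, RuleName.aiDown, RuleName.tDown, RuleName.s, RuleName.mix,
   RuleName.exR, RuleName.equivR}

/-- The system `KS1`. -/
def KS1 : Set RuleName :=
  {RuleName.allTop, RuleName.aiDown, RuleName.tDown, RuleName.s, RuleName.mix,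
   RuleName.exR, RuleName.equivR, RuleName.wDown, RuleName.m, RuleName.acDown,
   RuleName.mAll, RuleName.mEx, RuleName.wAll, RuleName.cAll}

/-! ## The sequent calculi LK1 and MLL1 -/

/-- One-sided sequent calculus on multisets of formulas. `SC true` is full `LK1`;
`SC false` is its linear fragment `MLL1` (no contraction and no weakening). -/
inductive SC : Bool → Multiset Form → Prop where
  | ax (full : Bool) (a : Form) (h : a.IsAtom) : SC full {a, a.negf}
  | top (full : Bool) : SC full {Form.top}
  | bot (full : Bool) {Γ : Multiset Form} : SC full Γ → SC full (Form.bot ::ₘ Γ)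
  | orR (full : Bool) {Γ : Multiset Form} {A B : Form} :
      SC full (A ::ₘ B ::ₘ Γ) → SC full (Form.or A B ::ₘ Γ)
  | andR (full : Bool) {Γ Δ : Multiset Form} {A B : Form} :
      SC full (A ::ₘ Γ) → SC full (B ::ₘ Δ) → SC full (Form.and A B ::ₘ (Γ + Δ))
  | mix (full : Bool) {Γ Δ : Multiset Form} : SC full Γ → SC full Δ → SC full (Γ + Δ)
  | exR (full : Bool) {Γ : Multiset Form} {A : Form} (x : ℕ) (t : Term) :
      SC full (A.subst1 x t ::ₘ Γ) → SC full (Form.ex x A ::ₘ Γ)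
  | allR (full : Bool) {Γ : Multiset Form} {A : Form} (x : ℕ)
      (h : ∀ B ∈ Γ, ¬ B.FreeVar x) :
      SC full (A ::ₘ Γ) → SC full (Form.all x A ::ₘ Γ)
  | ctr {Γ : Multiset Form} {A : Form} : SC true (A ::ₘ A ::ₘ Γ) → SC true (A ::ₘ Γ)
  | wk {Γ : Multiset Form} (A : Form) : SC true Γ → SC true (A ::ₘ Γ)

/-- Provability in the sequent calculus `LK1`. -/
def LK1 (Γ : Multiset Form) : Prop := SC true Γ

/-- Provability in the sequent calculus `MLL1` (first-order multiplicative
linear logic with mix). -/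
def MLL1 (Γ : Multiset Form) : Prop := SC false Γ

/-! An `LK1` proof is replayed in `MLL1` while weakening and contraction are postponed.
Along the induction we keep a `⊥`-free `MLL1`-provable sequent `G` and a one-to-one matching
of the formulas of `G` with formulas of the conclusion `Δ`, such that each matched formula of `Δ`
arises from its partner by deep weakening and contraction of disjuncts (`Form.Expands`); the
unmatched formulas of `Δ` (every `⊥`, every weakened formula) are weakened in. Read as a
derivation, this rewrites `⋁G` into `⋁Δ` using only `w↓`, `c↓` and `≡`. -/

namespace Multiset

variable {α β : Type*} {r : α → β → Prop} {a : α} {b : β}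
  {s s₁ s₂ : Multiset α} {t t' t₁ t₂ : Multiset β}

def SubRel (r : α → β → Prop) (s : Multiset α) (t : Multiset β) : Prop :=
  ∃ u ≤ t, Rel r s u

namespace SubRel

theorem of_rel (h : Rel r s t) : SubRel r s t :=
  ⟨t, le_rfl, h⟩

theorem mono_right (h : SubRel r s t) (ht : t ≤ t') : SubRel r s t' :=
  let ⟨u, hu, hr⟩ := h
  ⟨u, hu.trans ht, hr⟩

theorem cons (hab : r a b) (h : SubRel r s t) : SubRel r (a ::ₘ s) (b ::ₘ t) :=
  let ⟨u, hu, hr⟩ := h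
  ⟨b ::ₘ u, cons_le_cons b hu, hr.cons hab⟩

theorem add (h₁ : SubRel r s₁ t₁) (h₂ : SubRel r s₂ t₂) : SubRel r (s₁ + s₂) (t₁ + t₂) :=
  let ⟨u₁, hu₁, hr₁⟩ := h₁
  let ⟨u₂, hu₂, hr₂⟩ := h₂
  ⟨u₁ + u₂, add_le_add hu₁ hu₂, hr₁.add hr₂⟩

theorem of_cons_right (h : SubRel r s (b ::ₘ t)) :
    SubRel r s t ∨ ∃ a s', s = a ::ₘ s' ∧ r a b ∧ SubRel r s' t := by
  classical
  obtain ⟨u, hu, hr⟩ := h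
  by_cases hb : b ∈ u
  · rw [← cons_erase hb] at hr
    obtain ⟨a, s', hab, hr', rfl⟩ := rel_cons_right.1 hr
    exact Or.inr ⟨a, s', rfl, hab, u.erase b, erase_le_iff_le_cons.2 hu, hr'⟩
  · exact Or.inl ⟨u, (le_cons_of_notMem hb).1 hu, hr⟩

theorem exists_mem_of_mem (h : SubRel r s t) (ha : a ∈ s) : ∃ b ∈ t, r a b :=
  let ⟨_, hu, hr⟩ := h
  let ⟨b, hb, hab⟩ := exists_mem_of_rel_of_mem hr ha
  ⟨b, mem_of_le hu hb, hab⟩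

end SubRel

theorem exists_forall₂_of_rel_coe {l : List α} {u : Multiset β} (h : Rel r l u) :
    ∃ l' : List β, (l' : Multiset β) = u ∧ List.Forall₂ r l l' := by
  induction l generalizing u with
  | nil => exact ⟨[], (rel_zero_left.1 h).symm, .nil⟩
  | cons a l ih =>
    rw [← cons_coe] at h
    obtain ⟨b, u', hab, hr, rfl⟩ := rel_cons_left.1 h
    obtain ⟨l', rfl, hl'⟩ := ih hr
    exact ⟨b :: l', rfl, .cons hab hl'⟩

end Multiset

namespace Form

inductive Expands : Form → Form → Prop where
  | refl (A) : Expands A A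
  | andCongr {C D A B} : Expands C A → Expands D B → Expands (and C D) (and A B)
  | orCongr {C D A B} : Expands C A → Expands D B → Expands (or C D) (or A B)
  | allCongr (x) {C A} : Expands C A → Expands (all x C) (all x A)
  | exCongr (x) {C A} : Expands C A → Expands (ex x C) (ex x A)
  | wkl {C A} (B) : Expands C A → Expands C (or A B)
  | wkr {C B} (A) : Expands C B → Expands C (or A B)
  | ctr {C D A} : Expands C A → Expands D A → Expands (or C D) A

variable {x y : ℕ} {t : Term} {A B D P Q : Form}

theorem botFree_subst1 : (A.subst1 x t).BotFree ↔ A.BotFree := by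
  induction A <;> simp only [subst1] <;> (try split) <;> simp [BotFree, *]

theorem eq_and_of_subst1_eq (h : B.subst1 x t = and P Q) :
    ∃ P₀ Q₀, B = and P₀ Q₀ ∧ P₀.subst1 x t = P ∧ Q₀.subst1 x t = Q := by
  cases B <;> simp only [subst1] at h <;> (try split at h) <;> cases h
  exact ⟨_, _, rfl, rfl, rfl⟩

theorem eq_or_of_subst1_eq (h : B.subst1 x t = or P Q) :
    ∃ P₀ Q₀, B = or P₀ Q₀ ∧ P₀.subst1 x t = P ∧ Q₀.subst1 x t = Q := by
  cases B <;> simp only [subst1] at h <;> (try split at h) <;> cases h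
  exact ⟨_, _, rfl, rfl, rfl⟩

theorem eq_all_of_subst1_eq (h : B.subst1 x t = all y D) :
    ∃ A, B = all y A ∧ (y = x ∧ D = A ∨ y ≠ x ∧ D = A.subst1 x t) := by
  cases B <;> simp only [subst1] at h <;> (try split at h) <;> cases h <;>
    exact ⟨_, rfl, by simp [*]⟩

theorem eq_ex_of_subst1_eq (h : B.subst1 x t = ex y D) :
    ∃ A, B = ex y A ∧ (y = x ∧ D = A ∨ y ≠ x ∧ D = A.subst1 x t) := by
  cases B <;> simp only [subst1] at h <;> (try split at h) <;> cases h <;>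
    exact ⟨_, rfl, by simp [*]⟩

namespace Expands

theorem freeVar {C : Form} (h : C.Expands A) (hx : C.FreeVar x) : A.FreeVar x := by
  induction h with
  | refl => exact hx
  | andCongr _ _ ih₁ ih₂ =>
    cases hx with
    | andl hx => exact .andl (ih₁ hx)
    | andr hx => exact .andr (ih₂ hx)
  | orCongr _ _ ih₁ ih₂ =>
    cases hx with
    | orl hx => exact .orl (ih₁ hx)
    | orr hx => exact .orr (ih₂ hx)
  | allCongr _ _ ih => cases hx with | all hx hne => exact .all (ih hx) hne
  | exCongr _ _ ih => cases hx with | ex hx hne => exact .ex (ih hx) hne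
  | wkl _ _ ih => exact .orl (ih hx)
  | wkr _ _ ih => exact .orr (ih hx)
  | ctr _ _ ih₁ ih₂ =>
    cases hx with
    | orl hx => exact ih₁ hx
    | orr hx => exact ih₂ hx

/-- This is what lets the `∃`-rule be applied before the weakenings and contractions. -/
theorem exists_subst1_eq {C : Form} (h : C.Expands (B.subst1 x t)) :
    ∃ C₀ : Form, C₀.subst1 x t = C ∧ C₀.Expands B := by
  generalize hB : B.subst1 x t = B' at h
  induction h generalizing B with
  | refl => exact ⟨B, hB, .refl B⟩
  | andCongr _ _ ih₁ ih₂ =>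
    obtain ⟨P₀, Q₀, rfl, hP, hQ⟩ := eq_and_of_subst1_eq hB
    obtain ⟨C₀, rfl, hC⟩ := ih₁ hP
    obtain ⟨D₀, rfl, hD⟩ := ih₂ hQ
    exact ⟨and C₀ D₀, rfl, hC.andCongr hD⟩
  | orCongr _ _ ih₁ ih₂ =>
    obtain ⟨P₀, Q₀, rfl, hP, hQ⟩ := eq_or_of_subst1_eq hB
    obtain ⟨C₀, rfl, hC⟩ := ih₁ hP
    obtain ⟨D₀, rfl, hD⟩ := ih₂ hQ
    exact ⟨or C₀ D₀, rfl, hC.orCongr hD⟩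
  | @allCongr y C A hCA ih =>
    obtain ⟨A₀, rfl, ⟨rfl, rfl⟩ | ⟨hyx, hA⟩⟩ := eq_all_of_subst1_eq hB
    · exact ⟨all y C, by simp [subst1], hCA.allCongr y⟩
    · obtain ⟨C₀, rfl, hC⟩ := ih hA.symm
      exact ⟨all y C₀, by simp [subst1, hyx], hC.allCongr y⟩
  | @exCongr y C A hCA ih =>
    obtain ⟨A₀, rfl, ⟨rfl, rfl⟩ | ⟨hyx, hA⟩⟩ := eq_ex_of_subst1_eq hB
    · exact ⟨ex y C, by simp [subst1], hCA.exCongr y⟩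
    · obtain ⟨C₀, rfl, hC⟩ := ih hA.symm
      exact ⟨ex y C₀, by simp [subst1, hyx], hC.exCongr y⟩
  | wkl _ _ ih =>
    obtain ⟨P₀, Q₀, rfl, hP, -⟩ := eq_or_of_subst1_eq hB
    obtain ⟨C₀, hC₀, hC⟩ := ih hP
    exact ⟨C₀, hC₀, hC.wkl Q₀⟩
  | wkr _ _ ih =>
    obtain ⟨P₀, Q₀, rfl, -, hQ⟩ := eq_or_of_subst1_eq hB
    obtain ⟨C₀, hC₀, hC⟩ := ih hQ
    exact ⟨C₀, hC₀, hC.wkr P₀⟩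
  | ctr _ _ ih₁ ih₂ =>
    obtain ⟨C₀, rfl, hC⟩ := ih₁ hB
    obtain ⟨D₀, rfl, hD⟩ := ih₂ hB
    exact ⟨or C₀ D₀, rfl, hC.ctr hD⟩

end Expands

end Form

def Ctx.comp : Ctx → Ctx → Ctx
  | .hole, T => T
  | .andL S B, T => .andL (S.comp T) B
  | .andR B S, T => .andR B (S.comp T)
  | .orL S B, T => .orL (S.comp T) B
  | .orR B S, T => .orR B (S.comp T)
  | .all x S, T => .all x (S.comp T)
  | .ex x S, T => .ex x (S.comp T)

theorem Ctx.fill_comp (S T : Ctx) (A : Form) : (S.comp T).fill A = S.fill (T.fill A) := by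
  induction S <;> simp [Ctx.comp, Ctx.fill, *]

abbrev WCE : Set RuleName := {RuleName.wDown, RuleName.cDown, RuleName.equivR}

namespace Deriv

variable {R : Set RuleName} {A A' B B' : Form}

theorem ctx (S : Ctx) (h : Deriv R A B) : Deriv R (S.fill A) (S.fill B) := by
  refine Relation.ReflTransGen.lift S.fill (fun P Q hPQ => ?_) _ _ h
  obtain ⟨r, hr, T, P₀, Q₀, hs, rfl, rfl⟩ := hPQ
  exact ⟨r, hr, S.comp T, P₀, Q₀, hs, (Ctx.fill_comp ..).symm, (Ctx.fill_comp ..).symm⟩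

theorem and_congr (hA : Deriv R A A') (hB : Deriv R B B') : Deriv R (.and A B) (.and A' B') :=
  (hA.ctx (.andL .hole B)).trans (hB.ctx (.andR A' .hole))

theorem or_congr (hA : Deriv R A A') (hB : Deriv R B B') : Deriv R (.or A B) (.or A' B') :=
  (hA.ctx (.orL .hole B)).trans (hB.ctx (.orR A' .hole))

theorem of_shallow {r : RuleName} (hr : r ∈ R) (h : Shallow r A B) : Deriv R A B :=
  .single ⟨r, hr, .hole, A, B, h, rfl, rfl⟩

theorem wDown (A B : Form) : Deriv WCE A (.or A B) := of_shallow (by simp) (.wDown A B)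

theorem cDown (A : Form) : Deriv WCE (.or A A) A := of_shallow (by simp) (.cDown A)

theorem of_equiv (h : A.Equiv B) : Deriv WCE A B := of_shallow (by simp) (.equivR h.symm)

theorem bigOr_of_forall₂ {l₁ l₂ : List Form} (h : List.Forall₂ (Deriv R) l₁ l₂) :
    Deriv R (Form.bigOr l₁) (Form.bigOr l₂) := by
  induction h with
  | nil => exact .refl
  | cons hAB hl ih =>
    cases hl with
    | nil => exact hAB
    | cons => exact hAB.or_congr ih

end Deriv

theorem Form.Expands.deriv {C A : Form} (h : C.Expands A) : Deriv WCE C A := by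
  induction h with
  | refl => exact .refl
  | andCongr _ _ ih₁ ih₂ => exact ih₁.and_congr ih₂
  | orCongr _ _ ih₁ ih₂ => exact ih₁.or_congr ih₂
  | allCongr x _ ih => exact ih.ctx (.all x .hole)
  | exCongr x _ ih => exact ih.ctx (.ex x .hole)
  | wkl B _ ih => exact ih.trans (Deriv.wDown _ B)
  | wkr A _ ih => exact (ih.trans (Deriv.wDown _ A)).trans (Deriv.of_equiv (.orComm _ _))
  | ctr _ _ ih₁ ih₂ => exact (ih₁.or_congr ih₂).trans (Deriv.cDown _)

namespace Form

theorem bigOr_cons (A : Form) {l : List Form} (h : l ≠ []) : bigOr (A :: l) = or A (bigOr l) := by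
  cases l with
  | nil => exact absurd rfl h
  | cons B l => rfl

theorem equiv_bigOr_append {l₁ l₂ : List Form} (h₁ : l₁ ≠ []) (h₂ : l₂ ≠ []) :
    (bigOr (l₁ ++ l₂)).Equiv (or (bigOr l₁) (bigOr l₂)) := by
  induction l₁ with
  | nil => exact absurd rfl h₁
  | cons A l ih =>
    rcases eq_or_ne l [] with rfl | hl
    · rw [List.singleton_append, bigOr_cons A h₂]
      exact .refl _
    · rw [List.cons_append, bigOr_cons A (by simp [hl]), bigOr_cons A hl]
      exact (Equiv.orCongr (.refl A) (ih hl)).trans (Equiv.orAssoc _ _ _).symm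

theorem equiv_bigOr_of_perm {l₁ l₂ : List Form} (h : l₁.Perm l₂) :
    (bigOr l₁).Equiv (bigOr l₂) := by
  induction h with
  | nil => exact .refl _
  | @cons A l l' p ih =>
    rcases eq_or_ne l [] with rfl | hl
    · rw [p.symm.eq_nil]
      exact .refl _
    · rw [bigOr_cons A hl, bigOr_cons A fun h => hl (h ▸ p).eq_nil]
      exact .orCongr (.refl A) ih
  | @swap A B l =>
    rcases eq_or_ne l [] with rfl | hl
    · exact .orComm B A
    · rw [bigOr_cons B (by simp), bigOr_cons A hl, bigOr_cons A (by simp), bigOr_cons B hl]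
      exact (Equiv.orAssoc B A _).symm.trans
        ((Equiv.orCongr (.orComm B A) (.refl _)).trans (Equiv.orAssoc A B _))
  | trans _ _ ih₁ ih₂ => exact ih₁.trans ih₂

end Form

theorem Deriv.bigOr_append {l₁ : List Form} (h : l₁ ≠ []) (l₂ : List Form) :
    Deriv WCE (Form.bigOr l₁) (Form.bigOr (l₁ ++ l₂)) := by
  rcases eq_or_ne l₂ [] with rfl | h₂
  · rw [List.append_nil]
    exact .refl
  · exact (Deriv.wDown _ _).trans (Deriv.of_equiv (Form.equiv_bigOr_append h h₂).symm)

theorem SC.ne_zero {full : Bool} {Γ : Multiset Form} (h : SC full Γ) : Γ ≠ 0 := by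
  induction h <;> simp_all

open Form Multiset

def IsDecomposition (G Δ : Multiset Form) : Prop :=
  MLL1 G ∧ (∀ C ∈ G, C.BotFree) ∧ SubRel Expands G Δ

namespace IsDecomposition

variable {G G₁ G₂ Γ Δ : Multiset Form} {A B : Form}

theorem self (h : MLL1 G) (hbf : ∀ C ∈ G, C.BotFree) : IsDecomposition G G :=
  ⟨h, hbf, .of_rel (rel_refl_of_refl_on fun C _ => .refl C)⟩

theorem weaken (h : IsDecomposition G Δ) (A : Form) : IsDecomposition G (A ::ₘ Δ) :=
  ⟨h.1, h.2.1, h.2.2.mono_right (le_cons_self Δ A)⟩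

theorem add (h₁ : IsDecomposition G₁ Γ) (h₂ : IsDecomposition G₂ Δ) :
    IsDecomposition (G₁ + G₂) (Γ + Δ) :=
  ⟨SC.mix false h₁.1 h₂.1, by simpa [or_imp, forall_and] using ⟨h₁.2.1, h₂.2.1⟩,
    h₁.2.2.add h₂.2.2⟩

theorem ax (ha : A.IsAtom) : ∃ G, IsDecomposition G {A, A.negf} := by
  have htop : IsDecomposition {top} {top} := self (SC.top false) (by simp [BotFree])
  cases A <;> simp only [Form.IsAtom] at ha
  case pos => exact ⟨_, self (SC.ax false _ ha) (by simp [negf, BotFree])⟩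
  case neg => exact ⟨_, self (SC.ax false _ ha) (by simp [negf, BotFree])⟩
  case top => exact ⟨_, by rw [negf, pair_comm]; exact htop.weaken bot⟩
  case bot => exact ⟨_, htop.weaken bot⟩

/-- Both `∨` and contraction merge two formulas of the sequent into one; on the `MLL1` side
this is an `∨`-rule, or nothing when one of the two was weakened in. -/
theorem merge {X : Form} (h : IsDecomposition G (A ::ₘ B ::ₘ Γ))
    (hA : ∀ {C : Form}, C.Expands A → C.Expands X)
    (hB : ∀ {D : Form}, D.Expands B → D.Expands X)
    (hAB : ∀ {C D : Form}, C.Expands A → D.Expands B → (or C D).Expands X) :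
    ∃ G', IsDecomposition G' (X ::ₘ Γ) := by
  obtain ⟨hM, hbf, hG⟩ := h
  rcases hG.of_cons_right with hG | ⟨C, G₁, rfl, hC, hG₁⟩
  · rcases hG.of_cons_right with hG | ⟨D, G₂, rfl, hD, hG₂⟩
    · exact ⟨G, hM, hbf, hG.mono_right (le_cons_self Γ X)⟩
    · exact ⟨_, hM, hbf, hG₂.cons (hB hD)⟩
  · rcases hG₁.of_cons_right with hG₁ | ⟨D, G₂, rfl, hD, hG₂⟩
    · exact ⟨_, hM, hbf, hG₁.cons (hA hC)⟩
    · refine ⟨or C D ::ₘ G₂, SC.orR false hM, ?_, hG₂.cons (hAB hC hD)⟩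
      simpa [BotFree, and_assoc] using hbf

theorem and (h₁ : IsDecomposition G₁ (A ::ₘ Γ)) (h₂ : IsDecomposition G₂ (B ::ₘ Δ)) :
    ∃ G, IsDecomposition G (and A B ::ₘ (Γ + Δ)) := by
  obtain ⟨hM₁, hbf₁, hG₁⟩ := h₁
  obtain ⟨hM₂, hbf₂, hG₂⟩ := h₂
  rcases hG₁.of_cons_right with hG₁ | ⟨C, G₁, rfl, hC, hG₁⟩
  · exact ⟨_, hM₁, hbf₁, hG₁.mono_right ((le_add_right _ _).trans (le_cons_self _ _))⟩
  rcases hG₂.of_cons_right with hG₂ | ⟨D, G₂, rfl, hD, hG₂⟩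
  · exact ⟨_, hM₂, hbf₂, hG₂.mono_right ((le_add_left _ _).trans (le_cons_self _ _))⟩
  refine ⟨and C D ::ₘ (G₁ + G₂), SC.andR false hM₁ hM₂, ?_,
    (hG₁.add hG₂).cons (hC.andCongr hD)⟩
  simp only [forall_mem_cons] at hbf₁ hbf₂
  simpa [BotFree, or_imp, forall_and] using ⟨⟨hbf₁.1, hbf₂.1⟩, hbf₁.2, hbf₂.2⟩

theorem ex {x : ℕ} {t : Term} (h : IsDecomposition G (A.subst1 x t ::ₘ Γ)) :
    ∃ G', IsDecomposition G' (ex x A ::ₘ Γ) := by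
  obtain ⟨hM, hbf, hG⟩ := h
  rcases hG.of_cons_right with hG | ⟨C, G', rfl, hC, hG'⟩
  · exact ⟨G, hM, hbf, hG.mono_right (le_cons_self _ _)⟩
  obtain ⟨C₀, rfl, hC₀⟩ := hC.exists_subst1_eq
  refine ⟨ex x C₀ ::ₘ G', SC.exR false x t hM, ?_, hG'.cons (hC₀.exCongr x)⟩
  simpa [BotFree, botFree_subst1] using hbf

theorem all {x : ℕ} (h : IsDecomposition G (A ::ₘ Γ)) (hx : ∀ B ∈ Γ, ¬ B.FreeVar x) :
    ∃ G', IsDecomposition G' (all x A ::ₘ Γ) := by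
  obtain ⟨hM, hbf, hG⟩ := h
  rcases hG.of_cons_right with hG | ⟨C, G', rfl, hC, hG'⟩
  · exact ⟨G, hM, hbf, hG.mono_right (le_cons_self _ _)⟩
  have hx' : ∀ D ∈ G', ¬ D.FreeVar x := fun D hD hDx =>
    let ⟨B, hB, hDB⟩ := hG'.exists_mem_of_mem hD
    hx B hB (hDB.freeVar hDx)
  refine ⟨all x C ::ₘ G', SC.allR false x hx' hM, ?_, hG'.cons (hC.allCongr x)⟩
  simpa [BotFree] using hbf

end IsDecomposition

theorem SC.exists_isDecomposition {full : Bool} {Δ : Multiset Form} (h : SC full Δ) :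
    ∃ G, IsDecomposition G Δ := by
  induction h with
  | ax _ a ha => exact IsDecomposition.ax ha
  | top => exact ⟨_, .self (SC.top false) (by simp [BotFree])⟩
  | bot _ _ ih => exact ih.imp fun _ hG => hG.weaken .bot
  | orR _ _ ih => exact ih.elim fun _ hG => hG.merge (.wkl _) (.wkr _) .orCongr
  | andR _ _ _ ih₁ ih₂ => exact ih₁.elim fun _ h₁ => ih₂.elim fun _ h₂ => h₁.and h₂
  | mix _ _ _ ih₁ ih₂ => exact ih₁.elim fun _ h₁ => ih₂.elim fun _ h₂ => ⟨_, h₁.add h₂⟩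
  | exR _ _ _ _ ih => exact ih.elim fun _ hG => hG.ex
  | allR _ _ hx _ ih => exact ih.elim fun _ hG => hG.all hx
  | ctr _ ih => exact ih.elim fun _ hG => hG.merge id id .ctr
  | wk A _ ih => exact ih.imp fun _ hG => hG.weaken A

theorem Deriv.bigOr_of_subRel {g l : List Form} (h : SubRel Expands (g : Multiset Form) l)
    (hg : g ≠ []) : Deriv WCE (bigOr g) (bigOr l) := by
  obtain ⟨u, hu, hgu⟩ := h
  obtain ⟨l₁, rfl, hgl₁⟩ := exists_forall₂_of_rel_coe hgu
  obtain ⟨v, hv⟩ := Multiset.le_iff_exists_add.1 hu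
  obtain ⟨l₂, rfl⟩ := Quotient.exists_rep v
  have hl : l.Perm (l₁ ++ l₂) := coe_eq_coe.1 hv
  have hl₁ : l₁ ≠ [] := fun h => hg (List.forall₂_nil_right_iff.1 (h ▸ hgl₁))
  exact ((Deriv.bigOr_of_forall₂ (hgl₁.imp fun _ _ => Expands.deriv)).trans
    (Deriv.bigOr_append hl₁ l₂)).trans (Deriv.of_equiv (equiv_bigOr_of_perm hl.symm))

/-- Every `LK1`-provable sequent decomposes into an
`MLL1`-provable `⊥`-free sequent followed by `{w↓, c↓, ≡}`. -/
theorem LK1_decompose (Γ : List Form) (h : LK1 (↑Γ : Multiset Form)) :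
    ∃ Γ' : List Form, (∀ A ∈ Γ', A.BotFree) ∧ MLL1 (↑Γ' : Multiset Form) ∧
      Deriv {RuleName.wDown, RuleName.cDown, RuleName.equivR}
        (Form.bigOr Γ') (Form.bigOr Γ) := by
  obtain ⟨G, hM, hbf, hG⟩ := SC.exists_isDecomposition h
  obtain ⟨g, rfl⟩ := Quotient.exists_rep G
  refine ⟨g, hbf, hM, Deriv.bigOr_of_subRel hG ?_⟩
  rintro rfl
  exact hM.ne_zero rfl
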